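/- Let n ≥ 3, let P = ℚ[X₁,…,X_{2n}], and for I ⊆ {1,…,2n} with |I| = k set R_I = ∑_{ν=0}^{⌊(k−1)/2⌋} e_{k−1−2ν}(Xᵢ : i∈I)·X₁^{2ν} and S_I = ∑_{ν=0}^{⌊k/2⌋} e_{k−2ν}(Xᵢ : i∈I)·X₁^{2ν}. Let 𝔞⁰ be the ideal of P generated by all Xᵢ² − Xⱼ² together with all R_I, S_I with |I| = n+1; let 𝔞⁺ = 𝔞⁰ + (R_I, S_I : |I| = n, 1 ∈ I) and 𝔞⁻ = 𝔞⁰ + (R_I, S_I : |I| = n, 1 ∉ I), and set 𝒜⁺ = P/𝔞⁺, 𝒜⁻ = P/𝔞⁻. Then there is no ℚ-algebra isomorphism φ: 𝒜⁺ → 𝒜⁻ such that for every i the image φ(X̄ᵢ) of the class of Xᵢ lies in the ℚ-linear span of the classes X̄₁,…,X̄_{2n} in 𝒜⁻. -/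

import Mathlib

open MvPolynomial Finset

noncomputable section

/-- e_j(Xᵢ : i ∈ I), the elementary symmetric polynomial in the variables indexed by I. -/
def esF {N : ℕ} (I : Finset (Fin N)) (j : ℕ) : MvPolynomial (Fin N) ℚ :=
  ∑ J ∈ powersetCard j I, ∏ i ∈ J, X i

/-- R_I = ∑_{ν=0}^{⌊(|I|−1)/2⌋} e_{|I|−1−2ν}(Xᵢ : i∈I)·z^{2ν} (with z = X₁). -/
def RI {N : ℕ} (z : MvPolynomial (Fin N) ℚ) (I : Finset (Fin N)) : MvPolynomial (Fin N) ℚ :=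
  ∑ ν ∈ range ((I.card - 1) / 2 + 1), esF I (I.card - 1 - 2 * ν) * z ^ (2 * ν)

/-- S_I = ∑_{ν=0}^{⌊|I|/2⌋} e_{|I|−2ν}(Xᵢ : i∈I)·z^{2ν} (with z = X₁). -/
def SI {N : ℕ} (z : MvPolynomial (Fin N) ℚ) (I : Finset (Fin N)) : MvPolynomial (Fin N) ℚ :=
  ∑ ν ∈ range (I.card / 2 + 1), esF I (I.card - 2 * ν) * z ^ (2 * ν)

/-!
A graded isomorphism `𝒜⁺ ≅ 𝒜⁻` restricts to a bijection of the degree-one parts, because the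
classes `X̄ᵢ` are linearly independent modulo both ideals (all generators have degree `≥ 2`).
So it lifts to a substitution `Xₘ ↦ Uₘ` by linear forms that carries `𝔞⁻` into `𝔞⁺`.

The identity `2 z R_I = ∏_{i ∈ I} (Xᵢ + z) - ∏_{i ∈ I} (Xᵢ - z)` shows that `R_I` vanishes at every
`±1`-vector taking both signs on `I` and the value `1` at `z = X₁`. Hence the vector `ε` with `+1`
exactly at `z` and one more index `k` kills every homogeneous element of `𝔞⁺` of degree `< n`.
Transporting the relations of `𝔞⁻`, the values `vₘ = Uₘ(ε)` satisfy `vᵢ² = vⱼ²` and `R_I(v) = 0`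
for all `n`-sets `I ∌ z`. By pigeonhole `v` is constant on one such `I`, and then the identity
gives `(2 v_z)ⁿ = 0`, so `v = 0`. As the vectors `ε` span `ℚ^{2n}`, this forces `U_z = 0`,
although `U_z` lifts `X̄_z ≠ 0`.
-/

lemma Finset.sum_range_succ_eq_sum_odd {M : Type*} [AddCommMonoid M] {g : ℕ → M}
    (hg : ∀ m, Even m → g m = 0) {k : ℕ} (hk : 0 < k) :
    ∑ m ∈ range (k + 1), g m = ∑ ν ∈ range ((k - 1) / 2 + 1), g (2 * ν + 1) := by
  have hinj : Set.InjOn (fun ν => 2 * ν + 1) (range ((k - 1) / 2 + 1)) := fun a _ b _ h => by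
    simp only at h; omega
  rw [← Finset.sum_image hinj]
  symm
  apply Finset.sum_subset
  · intro m hm
    simp only [Finset.mem_image, Finset.mem_range] at hm ⊢
    omega
  · intro m hm hm'
    refine hg m (Nat.even_iff.mpr ?_)
    simp only [Finset.mem_image, Finset.mem_range, not_exists, not_and] at hm hm'
    by_contra h
    exact hm' (m / 2) (by omega) (by omega)

lemma span_range_eq_of_linearIndependent {K V ι : Type*} [Field K] [AddCommGroup V]
    [Module K V] [Fintype ι] {x y : ι → V} (hx : LinearIndependent K x)
    (hxy : ∀ i, x i ∈ Submodule.span K (Set.range y)) :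
    Submodule.span K (Set.range x) = Submodule.span K (Set.range y) := by
  have := FiniteDimensional.span_of_finite K (Set.finite_range y)
  exact Submodule.eq_of_le_of_finrank_le (Submodule.span_le.mpr (Set.range_subset_iff.mpr hxy))
    ((finrank_range_le_card y).trans (finrank_span_eq_card hx).ge)

namespace MvPolynomial

section General

variable {σ R : Type*} [CommRing R]

attribute [local instance] gradedAlgebra in
lemma homogeneousComponent_mul_of_isHomogeneous (a : MvPolynomial σ R) {g : MvPolynomial σ R}
    {e : ℕ} (hg : g.IsHomogeneous e) (d : ℕ) :
    homogeneousComponent d (a * g) = if e ≤ d then homogeneousComponent (d - e) a * g else 0 := by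
  simp only [← decomposition.decompose'_apply]
  exact DirectSum.coe_decompose_mul_of_right_mem (homogeneousSubmodule σ R) d (a := a)
    ((mem_homogeneousSubmodule e g).mpr hg)

lemma homogeneousComponent_mem_span {S : Set (MvPolynomial σ R)}
    (hS : ∀ g ∈ S, ∃ e, g.IsHomogeneous e) {p : MvPolynomial σ R} (hp : p ∈ Ideal.span S)
    (d : ℕ) : homogeneousComponent d p ∈ Ideal.span {g ∈ S | ∃ e ≤ d, g.IsHomogeneous e} := by
  induction hp using Submodule.span_induction generalizing d with
  | mem g hg =>
    obtain ⟨e, he⟩ := hS g hg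
    rw [homogeneousComponent_of_mem he]
    split_ifs with hde
    · exact Ideal.subset_span ⟨hg, e, hde.ge, he⟩
    · exact zero_mem _
  | zero => simp
  | add x y _ _ hx hy => rw [map_add]; exact add_mem (hx d) (hy d)
  | smul a x _ hx =>
    rw [smul_eq_mul, ← sum_homogeneousComponent x, Finset.mul_sum, map_sum]
    refine Ideal.sum_mem _ fun j _ => ?_
    rw [homogeneousComponent_mul_of_isHomogeneous a (homogeneousComponent_isHomogeneous j x)]
    split_ifs with hjd
    · refine Ideal.mul_mem_left _ _ (Ideal.span_mono ?_ (hx j))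
      exact fun g ⟨hg, e, he, hge⟩ => ⟨hg, e, he.trans hjd, hge⟩
    · exact zero_mem _

lemma eval_eq_zero_of_mem_span {S : Set (MvPolynomial σ R)} {x : σ → R} {D : ℕ}
    (hS : ∀ g ∈ S, ∃ e, g.IsHomogeneous e ∧ (e ≤ D → eval x g = 0))
    {p : MvPolynomial σ R} (hp : p ∈ Ideal.span S) {d : ℕ} (hpd : p.IsHomogeneous d)
    (hdD : d ≤ D) : eval x p = 0 := by
  have hlow := homogeneousComponent_mem_span (fun g hg => (hS g hg).imp fun _ => And.left) hp d
  rw [homogeneousComponent_eq_self hpd] at hlow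
  refine (Ideal.span_le (I := RingHom.ker (eval x))).mpr ?_ hlow
  rintro g ⟨hg, e', he'd, hge'⟩
  obtain ⟨e, hge, hvanish⟩ := hS g hg
  by_cases g0 : g = 0
  · simp [g0]
  · exact hvanish (hge.inj_right hge' g0 ▸ he'd.trans hdD)

lemma isHomogeneous_sum_smul_X (s : Finset σ) (c : σ → R) :
    (∑ j ∈ s, c j • (X j : MvPolynomial σ R)).IsHomogeneous 1 :=
  IsHomogeneous.sum _ _ _ fun j _ => by simpa [smul_eq_C_mul] using isHomogeneous_C_mul_X (c j) j

lemma linearIndependent_mk_X {S : Set (MvPolynomial σ R)}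
    (hS : ∀ g ∈ S, ∃ e, 2 ≤ e ∧ g.IsHomogeneous e) :
    LinearIndependent R fun j => Ideal.Quotient.mk (Ideal.span S) (X j : MvPolynomial σ R) := by
  classical
  refine linearIndependent_iff'.mpr fun s c hc i hi => ?_
  have hmem : ∑ j ∈ s, c j • X j ∈ Ideal.span S := by
    rw [← Ideal.Quotient.eq_zero_iff_mem, ← Ideal.Quotient.mkₐ_eq_mk R, map_sum]
    simpa using hc
  have hvanish := eval_eq_zero_of_mem_span (x := Pi.single i 1) (D := 1)
    (fun g hg => (hS g hg).imp fun e he => ⟨he.2, fun h => absurd h (by omega)⟩) hmem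
    (isHomogeneous_sum_smul_X s c) le_rfl
  simpa [Pi.single_apply, hi] using hvanish

lemma aeval_mem_of_algEquiv {a b : Ideal (MvPolynomial σ R)}
    (φ : (MvPolynomial σ R ⧸ a) ≃ₐ[R] (MvPolynomial σ R ⧸ b)) {U : σ → MvPolynomial σ R}
    (hU : ∀ m, φ (Ideal.Quotient.mk a (U m)) = Ideal.Quotient.mk b (X m))
    {g : MvPolynomial σ R} (hg : g ∈ b) : aeval U g ∈ a := by
  have hcomp : (φ : _ →ₐ[R] _).comp ((Ideal.Quotient.mkₐ R a).comp (aeval U)) =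
      Ideal.Quotient.mkₐ R b :=
    algHom_ext fun m => by simpa using hU m
  rw [← Ideal.Quotient.eq_zero_iff_mem, ← map_eq_zero_iff φ φ.injective]
  simpa [Ideal.Quotient.eq_zero_iff_mem.mpr hg] using DFunLike.congr_fun hcomp g

lemma eval_aeval (w : σ → R) (U : σ → MvPolynomial σ R) (g : MvPolynomial σ R) :
    eval w (aeval U g) = eval (fun m => eval w (U m)) g := by
  rw [aeval_eq_bind₁]
  exact eval₂Hom_bind₁ _ _ _ _

end General

variable {N : ℕ}

lemma isHomogeneous_esF (I : Finset (Fin N)) (j : ℕ) : (esF I j).IsHomogeneous j :=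
  IsHomogeneous.sum _ _ _ fun J hJ => by
    simpa [(Finset.mem_powersetCard.mp hJ).2] using
      IsHomogeneous.prod J (fun i => X i) (fun _ => 1) fun i _ => isHomogeneous_X ℚ i

lemma isHomogeneous_RI {z : MvPolynomial (Fin N) ℚ} (hz : z.IsHomogeneous 1)
    (I : Finset (Fin N)) : (RI z I).IsHomogeneous (I.card - 1) :=
  IsHomogeneous.sum _ _ _ fun ν hν => by
    convert (isHomogeneous_esF I _).mul (by simpa using hz.pow (2 * ν)) using 1
    simp only [Finset.mem_range] at hν
    omega

lemma isHomogeneous_SI {z : MvPolynomial (Fin N) ℚ} (hz : z.IsHomogeneous 1)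
    (I : Finset (Fin N)) : (SI z I).IsHomogeneous I.card :=
  IsHomogeneous.sum _ _ _ fun ν hν => by
    convert (isHomogeneous_esF I _).mul (by simpa using hz.pow (2 * ν)) using 1
    simp only [Finset.mem_range] at hν
    omega

lemma prod_X_add_eq_sum_esF (I : Finset (Fin N)) (z : MvPolynomial (Fin N) ℚ) :
    ∏ i ∈ I, (X i + z) = ∑ m ∈ range (I.card + 1), esF I (I.card - m) * z ^ m := by
  classical
  rw [Finset.prod_add, Finset.sum_powerset,
    ← Finset.sum_range_reflect (fun m => esF I (I.card - m) * z ^ m)]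
  refine Finset.sum_congr rfl fun m hm => ?_
  have hm : m ≤ I.card := Nat.lt_succ_iff.mp (Finset.mem_range.mp hm)
  rw [add_tsub_cancel_right, Nat.sub_sub_self hm, esF, Finset.sum_mul]
  refine Finset.sum_congr rfl fun J hJ => ?_
  rw [Finset.mem_powersetCard] at hJ
  rw [Finset.prod_const, Finset.card_sdiff_of_subset hJ.1, hJ.2]

-- For `I = ∅` truncated subtraction gives `RI z ∅ = 1`, and the identity fails.
lemma two_mul_mul_RI {I : Finset (Fin N)} (hI : I.Nonempty) (z : MvPolynomial (Fin N) ℚ) :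
    2 * z * RI z I = ∏ i ∈ I, (X i + z) - ∏ i ∈ I, (X i - z) := by
  simp_rw [sub_eq_add_neg (X _), prod_X_add_eq_sum_esF, ← Finset.sum_sub_distrib, ← mul_sub]
  rw [Finset.sum_range_succ_eq_sum_odd (fun m hm => by rw [hm.neg_pow, sub_self, mul_zero])
    hI.card_pos, RI, Finset.mul_sum]
  refine Finset.sum_congr rfl fun ν _ => ?_
  rw [(odd_two_mul_add_one ν).neg_pow, show I.card - (2 * ν + 1) = I.card - 1 - 2 * ν by omega]
  ring

lemma two_mul_eval_mul_eval_RI {I : Finset (Fin N)} (hI : I.Nonempty) (v : Fin N → ℚ)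
    (z : Fin N) :
    2 * v z * eval v (RI (X z) I) = ∏ i ∈ I, (v i + v z) - ∏ i ∈ I, (v i - v z) := by
  simpa using congrArg (eval v) (two_mul_mul_RI hI (X z))

lemma eval_RI_eq_zero {I : Finset (Fin N)} {v : Fin N → ℚ} {z : Fin N} (hz : v z ≠ 0)
    {i j : Fin N} (hi : i ∈ I) (hvi : v i = v z) (hj : j ∈ I) (hvj : v j = -v z) :
    eval v (RI (X z) I) = 0 := by
  have h := two_mul_eval_mul_eval_RI ⟨i, hi⟩ v z
  rw [Finset.prod_eq_zero hj (by rw [hvj, neg_add_cancel]),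
    Finset.prod_eq_zero hi (by rw [hvi, sub_self]), sub_zero] at h
  simpa [hz] using h

lemma eq_zero_of_eval_RI_eq_zero {n : ℕ} (hn : 0 < n) (hN : 2 * n ≤ N) (z : Fin N)
    {v : Fin N → ℚ} (hsq : ∀ i j, v i ^ 2 = v j ^ 2)
    (hR : ∀ I : Finset (Fin N), I.card = n → z ∉ I → eval v (RI (X z) I) = 0) : v = 0 := by
  classical
  -- Pigeonhole: `n` of the `2n - 1` coordinates other than `z` share a value `w = ±v z`.
  obtain ⟨w, hw, hfiber⟩ : ∃ w ∈ ({v z, -v z} : Finset ℚ),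
      n - 1 < ((univ.erase z).filter fun j => v j = w).card := by
    refine Finset.exists_lt_card_fiber_of_mul_lt_card_of_maps_to (fun j _ => ?_) ?_
    · simpa using sq_eq_sq_iff_eq_or_eq_neg.mp (hsq j z)
    · calc ({v z, -v z} : Finset ℚ).card * (n - 1) ≤ 2 * (n - 1) :=
            Nat.mul_le_mul_right _ Finset.card_le_two
        _ < (univ.erase z).card := by simp; omega
  obtain ⟨I, hIsub, hIcard⟩ :=
    Finset.exists_subset_card_eq (s := (univ.erase z).filter fun j => v j = w) (n := n) (by omega)
  have hzI : z ∉ I := fun hz => by simpa using hIsub hz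
  have hIw : ∀ i ∈ I, v i = w := fun i hi => (Finset.mem_filter.mp (hIsub hi)).2
  have key := two_mul_eval_mul_eval_RI (Finset.card_pos.mp (hIcard ▸ hn)) v z
  rw [hR I hIcard hzI, mul_zero,
    Finset.prod_eq_pow_card (b := w + v z) fun i hi => by rw [hIw i hi],
    Finset.prod_eq_pow_card (b := w - v z) fun i hi => by rw [hIw i hi], hIcard] at key
  have hvz : v z = 0 := by
    rcases Finset.mem_insert.mp hw with rfl | hw
    · rw [sub_self, zero_pow hn.ne', sub_zero, eq_comm, pow_eq_zero_iff hn.ne'] at key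
      linarith
    · rw [Finset.mem_singleton.mp hw, neg_add_cancel, zero_pow hn.ne', zero_sub, eq_comm,
        neg_eq_zero, pow_eq_zero_iff hn.ne'] at key
      linarith
  funext j
  simpa [hvz] using hsq j z

end MvPolynomial

def signVec {σ : Type*} [DecidableEq σ] (z k : σ) : σ → ℚ :=
  fun m => if m = z ∨ m = k then 1 else -1

section signVec

variable {σ : Type*} [DecidableEq σ]

lemma signVec_sq (z k m : σ) : signVec z k m ^ 2 = 1 := by
  unfold signVec; split_ifs <;> norm_num

@[simp]

lemma signVec_left (z k : σ) : signVec z k z = 1 := by simp [signVec]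

lemma eq_zero_of_sum_mul_signVec_eq_zero [Fintype σ] (z : σ) {b : σ → ℚ}
    (h : ∀ k, ∑ j, b j * signVec z k j = 0) : b = 0 := by
  have hoff : ∀ k ≠ z, b k = 0 := by
    intro k hk
    have hdiff : ∀ j, signVec z k j - signVec z z j = if j = k then 2 else 0 := by
      intro j
      by_cases hjk : j = k <;> by_cases hjz : j = z <;> simp_all [signVec]; norm_num
    have := congrArg₂ (· - ·) (h k) (h z)
    simp only [← Finset.sum_sub_distrib, ← mul_sub, hdiff, sub_zero] at this
    simpa using this
  funext j
  by_cases hj : j = z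
  · subst hj
    have hz := h j
    rwa [Finset.sum_eq_single j (fun i _ hi => by rw [hoff i hi, zero_mul]) (by simp),
      signVec_left, mul_one] at hz
  · exact hoff j hj

end signVec

-- `side := (z ∈ ·)` gives the generators of `𝔞⁺`, `side := (z ∉ ·)` those of `𝔞⁻`.
def chowRelations {N : ℕ} (n : ℕ) (z : Fin N) (side : Finset (Fin N) → Prop) :
    Set (MvPolynomial (Fin N) ℚ) :=
  {f | ∃ i j : Fin N, f = X i ^ 2 - X j ^ 2} ∪
  {f | ∃ I : Finset (Fin N), I.card = n + 1 ∧ (f = RI (X z) I ∨ f = SI (X z) I)} ∪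
  {f | ∃ I : Finset (Fin N), I.card = n ∧ side I ∧ (f = RI (X z) I ∨ f = SI (X z) I)}

namespace MvPolynomial

variable {N n : ℕ} {z : Fin N} {side : Finset (Fin N) → Prop}

lemma chowRelations_cases {g : MvPolynomial (Fin N) ℚ} (hg : g ∈ chowRelations n z side) :
    (∃ i j, g = X i ^ 2 - X j ^ 2) ∨ (∃ I, I.card = n ∧ side I ∧ g = RI (X z) I) ∨
      ∃ e, n ≤ e ∧ g.IsHomogeneous e := by
  have hz := isHomogeneous_X ℚ z
  rcases hg with (⟨i, j, rfl⟩ | ⟨I, hI, rfl | rfl⟩) | ⟨I, hI, hside, rfl | rfl⟩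
  · exact .inl ⟨i, j, rfl⟩
  · exact .inr (.inr ⟨n, le_rfl, by simpa [hI] using isHomogeneous_RI hz I⟩)
  · exact .inr (.inr ⟨n + 1, by omega, hI ▸ isHomogeneous_SI hz I⟩)
  · exact .inr (.inl ⟨I, hI, hside, rfl⟩)
  · exact .inr (.inr ⟨n, le_rfl, hI ▸ isHomogeneous_SI hz I⟩)

lemma isHomogeneous_of_mem_chowRelations (hn : 3 ≤ n) {g : MvPolynomial (Fin N) ℚ}
    (hg : g ∈ chowRelations n z side) : ∃ e, 2 ≤ e ∧ g.IsHomogeneous e := by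
  rcases chowRelations_cases hg with ⟨i, j, rfl⟩ | ⟨I, hI, -, rfl⟩ | ⟨e, he, hge⟩
  · exact ⟨2, le_rfl, (isHomogeneous_X_pow i 2).sub (isHomogeneous_X_pow j 2)⟩
  · exact ⟨n - 1, by omega, hI ▸ isHomogeneous_RI (isHomogeneous_X ℚ z) I⟩
  · exact ⟨e, by omega, hge⟩

lemma eval_signVec_eq_zero_of_mem_span (hn : 3 ≤ n) (k : Fin N) {p : MvPolynomial (Fin N) ℚ}
    (hp : p ∈ Ideal.span (chowRelations n z (z ∈ ·))) {d : ℕ} (hpd : p.IsHomogeneous d)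
    (hd : d ≤ n - 1) : eval (signVec z k) p = 0 := by
  refine eval_eq_zero_of_mem_span (fun g hg => ?_) hp hpd hd
  rcases chowRelations_cases hg with ⟨i, j, rfl⟩ | ⟨I, hI, hzI, rfl⟩ | ⟨e, he, hge⟩
  · exact ⟨2, (isHomogeneous_X_pow i 2).sub (isHomogeneous_X_pow j 2),
      fun _ => by simp [signVec_sq]⟩
  · refine ⟨n - 1, hI ▸ isHomogeneous_RI (isHomogeneous_X ℚ z) I, fun _ => ?_⟩
    obtain ⟨j, hjI, hjzk⟩ := Finset.exists_mem_notMem_of_card_lt_card (s := {z, k}) (t := I)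
      (Finset.card_le_two.trans_lt (by omega))
    simp only [Finset.mem_insert, Finset.mem_singleton, not_or] at hjzk
    exact eval_RI_eq_zero (by simp) hzI rfl hjI (by simp [signVec, hjzk])
  · exact ⟨e, hge, fun h => absurd h (by omega)⟩

lemma eval_signVec_eq_zero_of_aeval_mem (hn : 3 ≤ n) {z : Fin (2 * n)}
    {U : Fin (2 * n) → MvPolynomial (Fin (2 * n)) ℚ} (hU : ∀ m, (U m).IsHomogeneous 1)
    (hmap : ∀ g ∈ chowRelations n z (z ∉ ·), aeval U g ∈ Ideal.span (chowRelations n z (z ∈ ·)))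
    (k m : Fin (2 * n)) : eval (signVec z k) (U m) = 0 := by
  set v := fun m => eval (signVec z k) (U m)
  have hvanish : ∀ g ∈ chowRelations n z (z ∉ ·), ∀ d ≤ n - 1, g.IsHomogeneous d →
      eval v g = 0 := by
    intro g hg d hd hgd
    rw [← eval_aeval]
    exact eval_signVec_eq_zero_of_mem_span hn k (hmap g hg) (by simpa using hgd.aeval U hU) hd
  have hv : v = 0 := by
    refine eq_zero_of_eval_RI_eq_zero (by omega) le_rfl z (fun i j => ?_) fun I hI hzI => ?_
    · have := hvanish _ (.inl (.inl ⟨i, j, rfl⟩)) 2 (by omega)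
        ((isHomogeneous_X_pow i 2).sub (isHomogeneous_X_pow j 2))
      simpa [sub_eq_zero] using this
    · exact hvanish _ (.inr ⟨I, hI, hzI, .inl rfl⟩) (n - 1) le_rfl
        (by simpa [hI] using isHomogeneous_RI (isHomogeneous_X ℚ z) I)
  exact congrFun hv m

end MvPolynomial

theorem stmt11 (n : ℕ) (hn : 3 ≤ n)
    (aP aM : Ideal (MvPolynomial (Fin (2 * n)) ℚ))
    (haP : aP = Ideal.span
      ({f | ∃ i j : Fin (2 * n), f = X i ^ 2 - X j ^ 2} ∪
       {f | ∃ I : Finset (Fin (2 * n)), I.card = n + 1 ∧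
          (f = RI (X ⟨0, by omega⟩) I ∨ f = SI (X ⟨0, by omega⟩) I)} ∪
       {f | ∃ I : Finset (Fin (2 * n)), I.card = n ∧ (⟨0, by omega⟩ : Fin (2 * n)) ∈ I ∧
          (f = RI (X ⟨0, by omega⟩) I ∨ f = SI (X ⟨0, by omega⟩) I)}))
    (haM : aM = Ideal.span
      ({f | ∃ i j : Fin (2 * n), f = X i ^ 2 - X j ^ 2} ∪
       {f | ∃ I : Finset (Fin (2 * n)), I.card = n + 1 ∧
          (f = RI (X ⟨0, by omega⟩) I ∨ f = SI (X ⟨0, by omega⟩) I)} ∪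
       {f | ∃ I : Finset (Fin (2 * n)), I.card = n ∧ (⟨0, by omega⟩ : Fin (2 * n)) ∉ I ∧
          (f = RI (X ⟨0, by omega⟩) I ∨ f = SI (X ⟨0, by omega⟩) I)})) :
    ¬∃ φ : (MvPolynomial (Fin (2 * n)) ℚ ⧸ aP) ≃ₐ[ℚ] (MvPolynomial (Fin (2 * n)) ℚ ⧸ aM),
      ∀ i : Fin (2 * n), φ (Ideal.Quotient.mk aP (X i)) ∈
        Submodule.span ℚ (Set.range fun j : Fin (2 * n) => Ideal.Quotient.mk aM (X j)) := by
  rintro ⟨φ, hφ⟩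
  set z : Fin (2 * n) := ⟨0, by omega⟩
  replace haP : aP = Ideal.span (chowRelations n z (z ∈ ·)) := haP
  replace haM : aM = Ideal.span (chowRelations n z (z ∉ ·)) := haM
  have hindep (side : Finset (Fin (2 * n)) → Prop) :=
    linearIndependent_mk_X fun g => isHomogeneous_of_mem_chowRelations (z := z) (side := side) hn
  have hspan := span_range_eq_of_linearIndependent
    ((haP ▸ hindep _).map' φ.toLinearEquiv.toLinearMap φ.toLinearEquiv.ker) hφ
  have hlift (m : Fin (2 * n)) : Ideal.Quotient.mk aM (X m) ∈
      Submodule.span ℚ (Set.range fun j => φ (Ideal.Quotient.mk aP (X j))) :=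
    hspan ▸ Submodule.subset_span ⟨m, rfl⟩
  choose c hc using fun m => (Submodule.mem_span_range_iff_exists_fun ℚ).mp (hlift m)
  set U := fun m => ∑ i, c m i • (X i : MvPolynomial (Fin (2 * n)) ℚ)
  have hU (m : Fin (2 * n)) : φ (Ideal.Quotient.mk aP (U m)) = Ideal.Quotient.mk aM (X m) := by
    rw [← hc m]
    simp only [U, ← Ideal.Quotient.mkₐ_eq_mk ℚ, map_sum, map_smul]
  have hcz : c z = 0 := eq_zero_of_sum_mul_signVec_eq_zero z fun k => by
    simpa [U] using eval_signVec_eq_zero_of_aeval_mem hn (fun m => isHomogeneous_sum_smul_X _ _)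
      (fun g hg => haP ▸ aeval_mem_of_algEquiv φ hU (haM ▸ Ideal.subset_span hg)) k z
  refine (haM ▸ hindep _).ne_zero z ?_
  rw [← hU z]
  simp [U, hcz]

end
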